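/- arXiv:1602.04583 — 4 statements merged into one kernel-verified Lean document; each statement's English description precedes it below -/
import Mathlib

section
/- If α and β are roots in a reduced crystallographic root system with β ≠ ±α and (β, α^∨)(α, β^∨) = 3, then the span of Φ has dimension 2. -/
noncomputable section

variable {E : Type*} [AddCommGroup E] [Module ℚ E]

/-- The Cartan pairing `(β, α^∨) = 2(β,α)/(α,α)`. -/
def pairingB (B : E →ₗ[ℚ] E →ₗ[ℚ] ℚ) (β α : E) : ℚ := 2 * B β α / B α α

/-- A reduced crystallographic root system in a ℚ-vector space with a
positive-definite symmetric bilinear form. -/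
structure IsRootSystem (B : E →ₗ[ℚ] E →ₗ[ℚ] ℚ) (Φ : Set E) : Prop where
  finite : Φ.Finite
  ne_zero : ∀ α ∈ Φ, α ≠ 0
  symm : ∀ x y : E, B x y = B y x
  posdef : ∀ x : E, x ≠ 0 → 0 < B x x
  reduced : ∀ α ∈ Φ, ∀ t : ℚ, t • α ∈ Φ → t = 1 ∨ t = -1
  cryst : ∀ α ∈ Φ, ∀ β ∈ Φ, ∃ n : ℤ, pairingB B β α = n
  reflMem : ∀ α ∈ Φ, ∀ β ∈ Φ, β - pairingB B β α • α ∈ Φ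

/-- Irreducibility: no nontrivial orthogonal decomposition of `Φ`. -/
def IsIrreducibleRS (B : E →ₗ[ℚ] E →ₗ[ℚ] ℚ) (Φ : Set E) : Prop :=
  ∀ s : Set E, s ⊆ Φ → s.Nonempty →
    (∀ α ∈ s, ∀ β ∈ Φ, β ∉ s → B α β = 0) → Φ ⊆ s

/-- `RootChain Φ γ β p q` says that the `γ`-string through `β` is
`β - qγ, ..., β, ..., β + pγ`. -/
def RootChain (Φ : Set E) (γ β : E) (p q : ℕ) : Prop :=
  (∀ k : ℤ, -(q : ℤ) ≤ k → k ≤ (p : ℤ) → β + (k : ℚ) • γ ∈ Φ) ∧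
  β - ((q : ℚ) + 1) • γ ∉ Φ ∧ β + ((p : ℚ) + 1) • γ ∉ Φ

/-- A set of simple roots `α_i = a i`, indexed by a finite set `I`. -/
structure IsBase {I : Type*} [Fintype I] (Φ : Set E) (a : I → E) : Prop where
  mem : ∀ i, a i ∈ Φ
  indep : LinearIndependent ℚ a
  posneg : ∀ β ∈ Φ, (∃ c : I → ℕ, β = ∑ i, (c i : ℚ) • a i) ∨
    (∃ c : I → ℕ, β = -∑ i, (c i : ℚ) • a i)

/-!
After replacing `β` by `-β` if necessary and ordering the pair, there are roots `u` (short) and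
`v` (long) with `⟨v, u^∨⟩ = 3` and `⟨u, v^∨⟩ = 1`; reflections produce the `G₂` roots
`u, v - 2u, v - u` and `v, v - 3u, 2v - 3u`. For a root `γ` outside the plane `span {u, v}` and a
root `δ` in it, the Cartan product `⟨γ, δ^∨⟩⟨δ, γ^∨⟩ = 4 (δ, γ)² / ((δ, δ)(γ, γ))` is an integer,
and strict Cauchy–Schwarz puts it in `[0, 4)`. For three roots `δ₁, δ₂, δ₁ + δ₂` of equal length
this forces `γ` to be orthogonal to one of them; the short and the long triple together make `γ`
orthogonal to the plane, and irreducibility then puts `Φ` inside the plane.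
-/

lemma pairingB_eq_iff (B : E →ₗ[ℚ] E →ₗ[ℚ] ℚ) {β α : E} (hα : B α α ≠ 0) (c : ℚ) :
    pairingB B β α = c ↔ 2 * B β α = c * B α α :=
  div_eq_iff hα

lemma pairingB_neg_left (B : E →ₗ[ℚ] E →ₗ[ℚ] ℚ) (β α : E) :
    pairingB B (-β) α = -pairingB B β α := by
  simp [pairingB, neg_div]

lemma pairingB_neg_right (B : E →ₗ[ℚ] E →ₗ[ℚ] ℚ) (β α : E) :
    pairingB B β (-α) = -pairingB B β α := by
  simp [pairingB, neg_div]

lemma eq_zero_or_eq_zero_or_add_eq_zero_of_mul_sq_mem {r x y : ℚ} (hr : 0 < r)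
    (hx : r * x ^ 2 ∈ ({0, 1, 2, 3} : Set ℚ)) (hy : r * y ^ 2 ∈ ({0, 1, 2, 3} : Set ℚ))
    (hxy : r * (x + y) ^ 2 ∈ ({0, 1, 2, 3} : Set ℚ)) :
    x = 0 ∨ y = 0 ∨ x + y = 0 := by
  have bounds : ∀ z : ℚ, z ≠ 0 → r * z ^ 2 ∈ ({0, 1, 2, 3} : Set ℚ) →
      1 ≤ r * z ^ 2 ∧ r * z ^ 2 ≤ 3 := by
    intro z hz hmem
    have hpos : 0 < r * z ^ 2 := by positivity
    simp only [Set.mem_insert_iff, Set.mem_singleton_iff] at hmem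
    rcases hmem with h | h | h | h <;> constructor <;> linarith
  by_contra! hne
  obtain ⟨hx₁, hx₃⟩ := bounds x hne.1 hx
  obtain ⟨hy₁, hy₃⟩ := bounds y hne.2.1 hy
  obtain ⟨hxy₁, hxy₃⟩ := bounds (x + y) hne.2.2 hxy
  -- Two of `x`, `y`, `-(x + y)` have the same sign, and for those `r (p + q)² ≥ 1 + 1 + 2`.
  nlinarith

namespace IsRootSystem

variable {B : E →ₗ[ℚ] E →ₗ[ℚ] ℚ} {Φ : Set E}

lemma apply_self_pos (hRS : IsRootSystem B Φ) {α : E} (hα : α ∈ Φ) : 0 < B α α :=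
  hRS.posdef α (hRS.ne_zero α hα)

lemma sub_smul_mem (hRS : IsRootSystem B Φ) {α β : E} (hα : α ∈ Φ) (hβ : β ∈ Φ) {c : ℚ}
    (hc : pairingB B β α = c) : β - c • α ∈ Φ :=
  hc ▸ hRS.reflMem α hα β hβ

lemma neg_mem (hRS : IsRootSystem B Φ) {α : E} (hα : α ∈ Φ) : -α ∈ Φ := by
  have h := hRS.sub_smul_mem hα hα
    ((pairingB_eq_iff B (hRS.apply_self_pos hα).ne' 2).mpr rfl)
  rwa [two_smul, sub_add_cancel_left] at h

lemma exists_pairingB_eq_three_of_pos (hRS : IsRootSystem B Φ) {α β : E} (hα : α ∈ Φ)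
    (hβ : β ∈ Φ) (hpos : 0 < pairingB B β α)
    (h3 : pairingB B β α * pairingB B α β = 3) :
    ∃ u ∈ Φ, ∃ v ∈ Φ, pairingB B v u = 3 ∧ pairingB B u v = 1 := by
  obtain ⟨p, hp⟩ := hRS.cryst α hα β hβ
  obtain ⟨q, hq⟩ := hRS.cryst β hβ α hα
  rw [hp] at hpos
  rw [hp, hq] at h3
  have hpq : p * q = 3 := by exact_mod_cast h3
  have hp₀ : 0 < p := by exact_mod_cast hpos
  have hp₃ : p ≤ 3 := Int.le_of_dvd (by norm_num) ⟨q, hpq.symm⟩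
  interval_cases p
  · exact ⟨β, hβ, α, hα, by rw [hq]; norm_cast; omega, by rw [hp]; norm_num⟩
  · omega
  · exact ⟨α, hα, β, hβ, by rw [hp]; norm_num, by rw [hq]; norm_cast; omega⟩

lemma exists_pairingB_eq_three (hRS : IsRootSystem B Φ) {α β : E} (hα : α ∈ Φ) (hβ : β ∈ Φ)
    (h3 : pairingB B β α * pairingB B α β = 3) :
    ∃ u ∈ Φ, ∃ v ∈ Φ, pairingB B v u = 3 ∧ pairingB B u v = 1 := by
  have hne : pairingB B β α ≠ 0 := by
    rintro h
    simp [h] at h3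
  rcases hne.lt_or_gt with hneg | hpos
  · refine hRS.exists_pairingB_eq_three_of_pos hα (hRS.neg_mem hβ) ?_ ?_
    · rw [pairingB_neg_left]
      linarith
    · rwa [pairingB_neg_left, pairingB_neg_right, neg_mul_neg]
  · exact hRS.exists_pairingB_eq_three_of_pos hα hβ hpos h3

lemma four_div_mul_sq_mem (hRS : IsRootSystem B Φ) {γ δ : E} (hγ : γ ∈ Φ) (hδ : δ ∈ Φ)
    (hind : LinearIndependent ℚ ![δ, γ]) :
    4 / (B δ δ * B γ γ) * B δ γ ^ 2 ∈ ({0, 1, 2, 3} : Set ℚ) := by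
  obtain ⟨a, ha⟩ := hRS.cryst δ hδ γ hγ
  obtain ⟨b, hb⟩ := hRS.cryst γ hγ δ hδ
  have hδδ := hRS.apply_self_pos hδ
  have hγγ := hRS.apply_self_pos hγ
  have hsymm : B γ δ = B δ γ := hRS.symm γ δ
  have hprod : 4 / (B δ δ * B γ γ) * B δ γ ^ 2 = ((a * b : ℤ) : ℚ) := by
    rw [Int.cast_mul, ← ha, ← hb, pairingB, pairingB, hsymm]
    field_simp
    ring
  have hlt : B δ γ * B γ δ < B δ δ * B γ γ :=
    (LinearMap.BilinForm.apply_mul_apply_lt_iff_linearIndependent B hRS.posdef δ γ).mpr hind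
  rw [hsymm] at hlt
  have hnonneg : (0 : ℚ) ≤ ((a * b : ℤ) : ℚ) := by rw [← hprod]; positivity
  have hlt4 : ((a * b : ℤ) : ℚ) < 4 := by
    rw [← hprod, div_mul_eq_mul_div, div_lt_iff₀ (by positivity)]
    nlinarith
  rw [hprod]
  generalize a * b = k at hnonneg hlt4 ⊢
  have hk₀ : 0 ≤ k := by exact_mod_cast hnonneg
  have hk₄ : k < 4 := by exact_mod_cast hlt4
  interval_cases k <;> simp

lemma apply_eq_zero_or_of_add_mem (hRS : IsRootSystem B Φ) {γ δ₁ δ₂ : E} (hγ : γ ∈ Φ)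
    (hδ₁ : δ₁ ∈ Φ) (hδ₂ : δ₂ ∈ Φ) (hδ₁₂ : δ₁ + δ₂ ∈ Φ) (h₂ : B δ₂ δ₂ = B δ₁ δ₁)
    (h₁₂ : B (δ₁ + δ₂) (δ₁ + δ₂) = B δ₁ δ₁) (hγW : γ ∉ Submodule.span ℚ {δ₁, δ₂}) :
    B δ₁ γ = 0 ∨ B δ₂ γ = 0 ∨ B δ₁ γ + B δ₂ γ = 0 := by
  have hmem : ∀ δ ∈ Φ, δ ∈ Submodule.span ℚ {δ₁, δ₂} → B δ δ = B δ₁ δ₁ →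
      4 / (B δ₁ δ₁ * B γ γ) * B δ γ ^ 2 ∈ ({0, 1, 2, 3} : Set ℚ) := by
    intro δ hδ hδW hnorm
    rw [← hnorm]
    refine hRS.four_div_mul_sq_mem hγ hδ ((LinearIndependent.pair_iff' (hRS.ne_zero δ hδ)).mpr ?_)
    rintro c rfl
    exact hγW (Submodule.smul_mem _ c hδW)
  have hδ₁W : δ₁ ∈ Submodule.span ℚ {δ₁, δ₂} := Submodule.subset_span (by simp)
  have hδ₂W : δ₂ ∈ Submodule.span ℚ {δ₁, δ₂} := Submodule.subset_span (by simp)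
  have hr : 0 < 4 / (B δ₁ δ₁ * B γ γ) := by
    have := hRS.apply_self_pos hδ₁
    have := hRS.apply_self_pos hγ
    positivity
  refine eq_zero_or_eq_zero_or_add_eq_zero_of_mul_sq_mem hr (hmem δ₁ hδ₁ hδ₁W rfl)
    (hmem δ₂ hδ₂ hδ₂W h₂) ?_
  simpa only [map_add, LinearMap.add_apply] using
    hmem (δ₁ + δ₂) hδ₁₂ (add_mem hδ₁W hδ₂W) h₁₂

lemma apply_eq_zero_or_of_short_triple (hRS : IsRootSystem B Φ) {u v γ : E} (hu : u ∈ Φ)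
    (hv : v ∈ Φ) (h31 : pairingB B v u = 3) (h13 : pairingB B u v = 1) (hγ : γ ∈ Φ)
    (hγW : γ ∉ Submodule.span ℚ {u, v}) :
    B u γ = 0 ∨ B v γ = 2 * B u γ ∨ B v γ = B u γ := by
  have huu := hRS.apply_self_pos hu
  have hvu : 2 * B v u = 3 * B u u := (pairingB_eq_iff B huu.ne' 3).mp h31
  have huv : 2 * B u v = 1 * B v v := (pairingB_eq_iff B (hRS.apply_self_pos hv).ne' 1).mp h13
  have hsymm : B u v = B v u := hRS.symm u v
  have hv_u : v - u ∈ Φ := by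
    simpa only [one_smul, neg_sub] using hRS.neg_mem (hRS.sub_smul_mem hv hu h13)
  have hv_2u : v - (2 : ℚ) • u ∈ Φ := by
    have h : pairingB B (v - u) u = 1 := by
      rw [pairingB_eq_iff B huu.ne']
      simp only [map_sub, LinearMap.sub_apply]
      linarith
    convert hRS.sub_smul_mem hu hv_u h using 1
    module
  have hW : u ∈ Submodule.span ℚ {u, v} ∧ v ∈ Submodule.span ℚ {u, v} :=
    ⟨Submodule.subset_span (by simp), Submodule.subset_span (by simp)⟩
  have key := hRS.apply_eq_zero_or_of_add_mem hγ hu hv_2u (by convert hv_u using 1; module)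
    (by simp only [map_sub, map_smul, LinearMap.sub_apply, LinearMap.smul_apply, smul_eq_mul]
        linarith)
    (by simp only [map_add, map_sub, map_smul, LinearMap.add_apply, LinearMap.sub_apply,
          LinearMap.smul_apply, smul_eq_mul]
        linarith)
    fun h => hγW (Submodule.span_le.mpr
      (Set.pair_subset hW.1 (sub_mem hW.2 (Submodule.smul_mem _ _ hW.1))) h)
  simp only [map_sub, map_smul, LinearMap.sub_apply, LinearMap.smul_apply, smul_eq_mul] at key
  rcases key with h | h | h
  · exact .inl h
  · exact .inr (.inl (by linarith))
  · exact .inr (.inr (by linarith))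

lemma apply_eq_zero_or_of_long_triple (hRS : IsRootSystem B Φ) {u v γ : E} (hu : u ∈ Φ)
    (hv : v ∈ Φ) (h31 : pairingB B v u = 3) (h13 : pairingB B u v = 1) (hγ : γ ∈ Φ)
    (hγW : γ ∉ Submodule.span ℚ {u, v}) :
    B v γ = 0 ∨ B v γ = 3 * B u γ ∨ 2 * B v γ = 3 * B u γ := by
  have hvv := hRS.apply_self_pos hv
  have hvu : 2 * B v u = 3 * B u u := (pairingB_eq_iff B (hRS.apply_self_pos hu).ne' 3).mp h31
  have huv : 2 * B u v = 1 * B v v := (pairingB_eq_iff B hvv.ne' 1).mp h13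
  have hsymm : B u v = B v u := hRS.symm u v
  have hv_3u : v - (3 : ℚ) • u ∈ Φ := hRS.sub_smul_mem hu hv h31
  have h2v_3u : v + (v - (3 : ℚ) • u) ∈ Φ := by
    have h : pairingB B (v - (3 : ℚ) • u) v = -1 := by
      rw [pairingB_eq_iff B hvv.ne']
      simp only [map_sub, map_smul, LinearMap.sub_apply, LinearMap.smul_apply, smul_eq_mul]
      linarith
    convert hRS.sub_smul_mem hv hv_3u h using 1
    module
  have hW : u ∈ Submodule.span ℚ {u, v} ∧ v ∈ Submodule.span ℚ {u, v} :=
    ⟨Submodule.subset_span (by simp), Submodule.subset_span (by simp)⟩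
  have key := hRS.apply_eq_zero_or_of_add_mem hγ hv hv_3u h2v_3u
    (by simp only [map_sub, map_smul, LinearMap.sub_apply, LinearMap.smul_apply, smul_eq_mul]
        linarith)
    (by simp only [map_add, map_sub, map_smul, LinearMap.add_apply, LinearMap.sub_apply,
          LinearMap.smul_apply, smul_eq_mul]
        linarith)
    fun h => hγW (Submodule.span_le.mpr
      (Set.pair_subset hW.2 (sub_mem hW.2 (Submodule.smul_mem _ _ hW.1))) h)
  simp only [map_sub, map_smul, LinearMap.sub_apply, LinearMap.smul_apply, smul_eq_mul] at key
  rcases key with h | h | h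
  · exact .inl h
  · exact .inr (.inl (by linarith))
  · exact .inr (.inr (by linarith))

lemma apply_eq_zero_of_notMem_span_pair (hRS : IsRootSystem B Φ) {u v γ : E} (hu : u ∈ Φ)
    (hv : v ∈ Φ) (h31 : pairingB B v u = 3) (h13 : pairingB B u v = 1) (hγ : γ ∈ Φ)
    (hγW : γ ∉ Submodule.span ℚ {u, v}) :
    ∀ w ∈ Submodule.span ℚ {u, v}, B w γ = 0 := by
  have hzero : B u γ = 0 ∧ B v γ = 0 := by
    rcases hRS.apply_eq_zero_or_of_short_triple hu hv h31 h13 hγ hγW with h | h | h <;>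
    rcases hRS.apply_eq_zero_or_of_long_triple hu hv h31 h13 hγ hγW with h' | h' | h' <;>
    constructor <;> linarith
  intro w hw
  refine Submodule.span_le (p := LinearMap.ker (B.flip γ)) |>.mpr ?_ hw
  simp [Set.insert_subset_iff, hzero]

end IsRootSystem

lemma IsIrreducibleRS.subset_of_forall_apply_eq_zero {B : E →ₗ[ℚ] E →ₗ[ℚ] ℚ} {Φ : Set E}
    (hirr : IsIrreducibleRS B Φ) {W : Submodule ℚ E} (hne : ∃ α ∈ Φ, α ∈ W)
    (horth : ∀ γ ∈ Φ, γ ∉ W → ∀ w ∈ W, B w γ = 0) : Φ ⊆ W := fun _ hx =>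
  (hirr (Φ ∩ W) Set.inter_subset_left hne
    (fun _ hα _ hγ hγs => horth _ hγ (fun h => hγs ⟨hγ, h⟩) _ hα.2) hx).2

theorem rank_two_of_cartan_product_eq_three_general
    (B : E →ₗ[ℚ] E →ₗ[ℚ] ℚ) (Φ : Set E) (hRS : IsRootSystem B Φ)
    (hirr : IsIrreducibleRS B Φ)
    {α β : E} (hα : α ∈ Φ) (hβ : β ∈ Φ)
    (h3 : pairingB B β α * pairingB B α β = 3) :
    Module.finrank ℚ (Submodule.span ℚ Φ) = 2 := by
  obtain ⟨u, hu, v, hv, h31, h13⟩ := hRS.exists_pairingB_eq_three hα hβ h3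
  have hΦ : Φ ⊆ Submodule.span ℚ {u, v} :=
    hirr.subset_of_forall_apply_eq_zero ⟨u, hu, Submodule.subset_span (by simp)⟩
      fun γ hγ hγW => hRS.apply_eq_zero_of_notMem_span_pair hu hv h31 h13 hγ hγW
  have hspan : Submodule.span ℚ Φ = Submodule.span ℚ {u, v} :=
    le_antisymm (Submodule.span_le.mpr hΦ)
      (Submodule.span_mono (Set.pair_subset hu hv))
  have hind : LinearIndependent ℚ ![u, v] := by
    refine (LinearMap.BilinForm.apply_mul_apply_lt_iff_linearIndependent B hRS.posdef u v).mp ?_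
    have huu := hRS.apply_self_pos hu
    rw [pairingB_eq_iff B huu.ne'] at h31
    rw [pairingB_eq_iff B (hRS.apply_self_pos hv).ne'] at h13
    rw [hRS.symm u v] at h13 ⊢
    nlinarith
  rw [hspan, ← Matrix.range_cons_cons_empty u v ![], finrank_span_eq_card hind, Fintype.card_fin]

theorem rank_two_of_cartan_product_eq_three
    (B : E →ₗ[ℚ] E →ₗ[ℚ] ℚ) (Φ : Set E) (hRS : IsRootSystem B Φ)
    (hirr : IsIrreducibleRS B Φ)
    {α β : E} (hα : α ∈ Φ) (hβ : β ∈ Φ) (h1 : β ≠ α) (h2 : β ≠ -α)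
    (h3 : pairingB B β α * pairingB B α β = 3) :
    Module.finrank ℚ (Submodule.span ℚ Φ) = 2 :=
  rank_two_of_cartan_product_eq_three_general B Φ hRS hirr hα hβ h3
end
end

section
/- Let α, β be roots with β ≠ ±α, and let p, q be the lengths of the α-string through β as above. If p + q = 3, then the span of Φ has dimension 2. -/
noncomputable section

variable {E : Type*} [AddCommGroup E] [Module ℚ E]

/-!
Let `γ = β - qα` be the bottom of the string. Every root of the string is independent of `α`, so its
Cartan integer against `α` lies in `[-3, 3]`; these integers grow by `2` per step, so a string of
four roots forces `⟨γ, α^∨⟩ = -3`, hence `⟨α, γ^∨⟩ = -1` and `|γ|² = 3|α|²`: `α` and `γ` span a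
plane `V` of type G₂. A root `δ ∉ V` is strictly longer than its projection to `V`, whose squared
length is `|α|² (a² + 3ac + 3c²)` with `a = ⟨δ, α^∨⟩`, `c = ⟨δ, γ^∨⟩`; combined with the integrality
of `⟨α, δ^∨⟩` and `⟨γ, δ^∨⟩` this forces `a = c = 0`. So the roots in `V` are orthogonal to all
other roots, and irreducibility gives `Φ ⊆ V`.
-/

open Submodule

variable {B : E →ₗ[ℚ] E →ₗ[ℚ] ℚ} {Φ : Set E}

lemma pairingB_mul_apply_self {x y : E} (hy : B y y ≠ 0) :
    pairingB B x y * B y y = 2 * B x y :=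
  div_mul_cancel₀ _ hy

lemma pairingB_add_smul {x y : E} (hy : B y y ≠ 0) (t : ℚ) :
    pairingB B (x + t • y) y = pairingB B x y + 2 * t := by
  simp only [pairingB, map_add, map_smul, LinearMap.add_apply, LinearMap.smul_apply, smul_eq_mul]
  field_simp

lemma pairingB_mul_pairingB (x y : E) :
    pairingB B x y * pairingB B y x = 4 * (B x y * B y x) / (B x x * B y y) := by
  simp only [pairingB]
  rw [div_mul_div_comm, mul_comm (B y y)]
  ring

lemma eq_zero_of_G2_constraints {a c a' c' : ℤ} (hrel : a * c' = 3 * c * a')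
    (ha : a ≠ 0 → 0 < a * a' ∧ (a ^ 2 + 3 * a * c + 3 * c ^ 2) * (a * a') < a * a)
    (hc : c ≠ 0 → 0 < c * c' ∧ (a ^ 2 + 3 * a * c + 3 * c ^ 2) * (c * c') < 3 * c * c) :
    a = 0 ∧ c = 0 := by
  by_contra hne
  rcases eq_or_ne a 0 with rfl | ha0
  · obtain ⟨hpos, hlt⟩ := hc (by simpa using hne)
    nlinarith
  · obtain ⟨hpos, hlt⟩ := ha ha0
    have hQa : a ^ 2 + 3 * a * c + 3 * c ^ 2 < |a| := by
      have h1 : 1 ≤ |a'| := Int.one_le_abs (by rintro rfl; simp at hpos)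
      have h2 : a * a' = |a| * |a'| := by rw [← abs_mul, abs_of_pos hpos]
      have h3 : 0 < |a| := abs_pos.mpr ha0
      nlinarith [abs_mul_abs_self a, sq_nonneg (2 * a + 3 * c), sq_nonneg c]
    have h4 : a ^ 2 + 3 * (a + 2 * c) ^ 2 < 4 * |a| := by linarith
    have hab : -3 ≤ a ∧ a ≤ 3 := by
      constructor <;> cases abs_cases a <;> nlinarith [sq_nonneg (a + 2 * c)]
    have hcb : -2 ≤ c ∧ c ≤ 2 := by
      constructor <;> cases abs_cases a <;> nlinarith [sq_nonneg (a + 2 * c)]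
    obtain ⟨ha1, ha2⟩ := hab
    obtain ⟨hc1, hc2⟩ := hcb
    -- only `(a, c) = ±(2, -1)` survives `h4`, and there `hrel` makes `a'` even
    interval_cases a <;> interval_cases c <;> omega

/-- Here `r = |δ|² / |α|²`, `a = ⟨δ, α^∨⟩`, `c = ⟨δ, γ^∨⟩`, `a' = ⟨α, δ^∨⟩`, `c' = ⟨γ, δ^∨⟩` for a
root `δ` and a G₂ pair `α, γ` with `|γ|² = 3|α|²`; the last hypothesis says that `δ` is longer than
its projection to the plane of `α, γ`. -/
lemma eq_zero_of_G2_pairings {a c a' c' : ℤ} {r : ℚ} (ha : (a : ℚ) = a' * r)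
    (hc : 3 * (c : ℚ) = c' * r) (hr : ((a ^ 2 + 3 * a * c + 3 * c ^ 2 : ℤ) : ℚ) < r) :
    a = 0 ∧ c = 0 := by
  set Q := a ^ 2 + 3 * a * c + 3 * c ^ 2 with hQ
  have hQ0 : 0 ≤ Q := by rw [hQ]; nlinarith [sq_nonneg (2 * a + 3 * c)]
  have hr0 : 0 < r := lt_of_le_of_lt (by exact_mod_cast hQ0) hr
  refine eq_zero_of_G2_constraints (a' := a') (c' := c') ?_ (fun ha0 ↦ ?_) (fun hc0 ↦ ?_)
  · exact_mod_cast (by linear_combination (c' : ℚ) * ha - a' * hc : (a : ℚ) * c' = 3 * c * a')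
  · have ha'0 : (a' : ℚ) ≠ 0 := fun h ↦ ha0 (by rw [h, zero_mul] at ha; exact_mod_cast ha)
    have hpos : (0 : ℚ) < a' ^ 2 * r := by positivity
    constructor
    · exact_mod_cast (by rw [ha]; linarith : (0 : ℚ) < a * a')
    · exact_mod_cast (by rw [ha]; nlinarith : (Q : ℚ) * (a * a') < a * a)
  · have hc'0 : (c' : ℚ) ≠ 0 := fun h ↦ hc0 (by
      rw [h, zero_mul] at hc; exact_mod_cast (by linarith : (c : ℚ) = 0))
    have hpos : (0 : ℚ) < c' ^ 2 * r := by positivity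
    have hc3 : (c : ℚ) = c' * r / 3 := by linarith
    constructor
    · exact_mod_cast (by rw [hc3]; nlinarith : (0 : ℚ) < c * c')
    · exact_mod_cast (by rw [hc3]; nlinarith : (Q : ℚ) * (c * c') < 3 * c * c)

namespace IsRootSystem

variable (hRS : IsRootSystem B Φ)
include hRS

lemma pairingB_mul_pairingB_nonneg (x y : E) : 0 ≤ pairingB B x y * pairingB B y x := by
  have hle (z : E) : 0 ≤ B z z := by
    rcases eq_or_ne z 0 with rfl | hz
    · simp
    · exact (hRS.posdef z hz).le
  rw [pairingB_mul_pairingB, hRS.symm y x]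
  exact div_nonneg (mul_nonneg zero_le_four (mul_self_nonneg _)) (mul_nonneg (hle x) (hle y))

lemma pairingB_mul_pairingB_lt_four {x y : E} (h : LinearIndependent ℚ ![x, y]) :
    pairingB B x y * pairingB B y x < 4 := by
  have hx := hRS.posdef x (h.ne_zero 0)
  have hy := hRS.posdef y (h.ne_zero 1)
  have hcs := (LinearMap.BilinForm.apply_mul_apply_lt_iff_linearIndependent B hRS.posdef x y).2 h
  rw [pairingB_mul_pairingB, div_lt_iff₀ (by positivity)]
  linarith

lemma pairingB_eq_zero_comm {x y : E} (hx : x ≠ 0) (hy : y ≠ 0) :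
    pairingB B x y = 0 ↔ pairingB B y x = 0 := by
  have hx := (hRS.posdef x hx).ne'
  have hy := (hRS.posdef y hy).ne'
  simp [pairingB, hx, hy, hRS.symm x y]

lemma abs_pairingB_le_three {x y : E} (hx : x ∈ Φ) (hy : y ∈ Φ)
    (h : LinearIndependent ℚ ![x, y]) : |pairingB B x y| ≤ 3 := by
  obtain ⟨n, hn⟩ := hRS.cryst y hy x hx
  obtain ⟨n', hn'⟩ := hRS.cryst x hx y hy
  have h0 : 0 ≤ n * n' := by exact_mod_cast hn ▸ hn' ▸ hRS.pairingB_mul_pairingB_nonneg x y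
  have h4 : n * n' < 4 := by exact_mod_cast hn ▸ hn' ▸ hRS.pairingB_mul_pairingB_lt_four h
  have hn'0 : n ≠ 0 → n' ≠ 0 := by
    have := hRS.pairingB_eq_zero_comm (hRS.ne_zero x hx) (hRS.ne_zero y hy)
    rw [hn, hn'] at this
    rintro hn0 rfl
    exact hn0 (by exact_mod_cast this.2 Int.cast_zero)
  rw [hn]
  suffices |n| ≤ 3 by exact_mod_cast this
  rcases eq_or_ne n 0 with rfl | hn0
  · simp
  · calc |n| ≤ |n| * |n'| := le_mul_of_one_le_right (abs_nonneg n) (Int.one_le_abs (hn'0 hn0))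
      _ = n * n' := by rw [← abs_mul, abs_of_nonneg h0]
      _ ≤ 3 := by omega

lemma pairingB_eq_neg_one_of_pairingB_eq_neg_three {x y : E} (hx : x ∈ Φ) (hy : y ∈ Φ)
    (h : LinearIndependent ℚ ![x, y]) (hxy : pairingB B x y = -3) : pairingB B y x = -1 := by
  obtain ⟨n', hn'⟩ := hRS.cryst x hx y hy
  have h0 : 0 ≤ -3 * n' := by exact_mod_cast hxy ▸ hn' ▸ hRS.pairingB_mul_pairingB_nonneg x y
  have h4 : -3 * n' < 4 := by exact_mod_cast hxy ▸ hn' ▸ hRS.pairingB_mul_pairingB_lt_four h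
  have hn'0 : n' ≠ 0 := by
    rintro rfl
    have := (hRS.pairingB_eq_zero_comm (hRS.ne_zero x hx) (hRS.ne_zero y hy)).2 (by simpa using hn')
    norm_num [hxy] at this
  rw [hn']
  exact_mod_cast (by omega : n' = -1)

lemma linearIndependent_of_ne {α β : E} (hα : α ∈ Φ) (hβ : β ∈ Φ) (h1 : β ≠ α) (h2 : β ≠ -α) :
    LinearIndependent ℚ ![α, β] := by
  rw [LinearIndependent.pair_iff' (hRS.ne_zero α hα)]
  rintro t rfl
  rcases hRS.reduced α hα t hβ with rfl | rfl
  · exact h1 (one_smul ℚ α)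
  · exact h2 (by rw [neg_smul, one_smul])

lemma linearIndependent_add_smul {α β : E} (hα : α ∈ Φ) (hβ : β ∈ Φ) (h1 : β ≠ α)
    (h2 : β ≠ -α) (t : ℚ) : LinearIndependent ℚ ![α, β + t • α] := by
  rw [add_comm, LinearIndependent.pair_add_smul_right_iff]
  exact hRS.linearIndependent_of_ne hα hβ h1 h2

lemma apply_self_eq_three_mul {α γ : E} (hα : α ≠ 0) (hγ : γ ≠ 0)
    (hγα : pairingB B γ α = -3) (hαγ : pairingB B α γ = -1) : B γ γ = 3 * B α α := by
  have h1 := pairingB_mul_apply_self (x := γ) (hRS.posdef α hα).ne'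
  have h2 := pairingB_mul_apply_self (x := α) (hRS.posdef γ hγ).ne'
  rw [hγα] at h1
  rw [hαγ, hRS.symm α γ] at h2
  linarith

lemma apply_self_gt_of_notMem_span_pair {α γ δ : E} (hα : α ≠ 0) (hγ : γ ≠ 0)
    (hγα : pairingB B γ α = -3) (hαγ : pairingB B α γ = -1) (hδ : δ ∉ span ℚ {α, γ}) :
    B α α * (pairingB B δ α ^ 2 + 3 * pairingB B δ α * pairingB B δ γ
      + 3 * pairingB B δ γ ^ 2) < B δ δ := by
  have hαα := (hRS.posdef α hα).ne'
  have hγγ := hRS.apply_self_eq_three_mul hα hγ hγα hαγ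
  have hγα' := pairingB_mul_apply_self (x := γ) hαα
  rw [hγα] at hγα'
  set a := pairingB B δ α
  set c := pairingB B δ γ
  have hδα : 2 * B δ α = a * B α α := (pairingB_mul_apply_self hαα).symm
  have hδγ : 2 * B δ γ = c * B γ γ := (pairingB_mul_apply_self (hRS.posdef γ hγ).ne').symm
  -- the coefficients solve the Gram system, so `w` is orthogonal to `α` and `γ`
  set w := δ - ((2 * a + 3 * c) • α + (a + 2 * c) • γ)
  have hw : w ≠ 0 := by
    rw [sub_ne_zero]
    intro h
    exact hδ (mem_span_pair.2 ⟨_, _, h.symm⟩)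
  have hww : B w w = B δ δ - B α α * (a ^ 2 + 3 * a * c + 3 * c ^ 2) := by
    simp only [w, map_sub, map_add, map_smul, LinearMap.sub_apply, LinearMap.add_apply,
      LinearMap.smul_apply, smul_eq_mul, hRS.symm α δ, hRS.symm γ δ, hRS.symm α γ]
    linear_combination (-(2 * a + 3 * c)) * hδα - (a + 2 * c) * hδγ
      - (2 * a + 3 * c) * (a + 2 * c) * hγα' + ((a + 2 * c) ^ 2 - (a + 2 * c) * c) * hγγ
  linarith [hRS.posdef w hw]

lemma orthogonal_of_notMem_span_pair {α γ δ : E} (hα : α ∈ Φ) (hγ : γ ∈ Φ) (hδ : δ ∈ Φ)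
    (hγα : pairingB B γ α = -3) (hαγ : pairingB B α γ = -1) (hδV : δ ∉ span ℚ {α, γ}) :
    B α δ = 0 ∧ B γ δ = 0 := by
  have hα0 := hRS.ne_zero α hα
  have hγ0 := hRS.ne_zero γ hγ
  have hαα := hRS.posdef α hα0
  have hγγ := hRS.apply_self_eq_three_mul hα0 hγ0 hγα hαγ
  have hδδ := (hRS.posdef δ (hRS.ne_zero δ hδ)).ne'
  obtain ⟨a, ha⟩ := hRS.cryst α hα δ hδ
  obtain ⟨c, hc⟩ := hRS.cryst γ hγ δ hδ
  obtain ⟨a', ha'⟩ := hRS.cryst δ hδ α hα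
  obtain ⟨c', hc'⟩ := hRS.cryst δ hδ γ hγ
  have hproj := hRS.apply_self_gt_of_notMem_span_pair hα0 hγ0 hγα hαγ hδV
  rw [ha, hc] at hproj
  obtain ⟨rfl, rfl⟩ := eq_zero_of_G2_pairings (r := B δ δ / B α α) (a' := a') (c' := c')
    (by rw [← ha, ← ha', pairingB, pairingB, hRS.symm α δ]; field_simp)
    (by rw [← hc, ← hc', pairingB, pairingB, hγγ, hRS.symm γ δ]; field_simp)
    (by rw [lt_div_iff₀ hαα]; push_cast; linarith)
  constructor
  · simpa [pairingB, hαα.ne', hRS.symm δ α] using ha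
  · simpa [pairingB, hγγ, hαα.ne', hRS.symm δ γ] using hc

end IsRootSystem

lemma IsIrreducibleRS.subset_span_of_orthogonal (hirr : IsIrreducibleRS B Φ) {s : Set E}
    (hsΦ : s ⊆ Φ) (hs : s.Nonempty) (horth : ∀ δ ∈ Φ, δ ∉ span ℚ s → ∀ x ∈ s, B x δ = 0) :
    Φ ⊆ span ℚ s := by
  obtain ⟨y, hy⟩ := hs
  refine fun x hx ↦ (hirr (Φ ∩ span ℚ s) Set.inter_subset_left ⟨y, hsΦ hy, subset_span hy⟩
    ?_ hx).2
  rintro ε ⟨-, hε⟩ δ hδ hδs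
  have hδV : δ ∉ span ℚ s := fun h ↦ hδs ⟨hδ, h⟩
  have : span ℚ s ≤ LinearMap.ker (B.flip δ) := span_le.2 fun x hx ↦ horth δ hδ hδV x hx
  exact this hε

namespace RootChain

variable {α β : E} {p q : ℕ}

lemma sub_mem (hchain : RootChain Φ α β p q) : β - (q : ℚ) • α ∈ Φ := by
  simpa [sub_eq_add_neg] using hchain.1 (-q) le_rfl (by omega)

lemma pairingB_sub_eq_neg_three (hRS : IsRootSystem B Φ) (hα : α ∈ Φ) (hβ : β ∈ Φ)
    (h1 : β ≠ α) (h2 : β ≠ -α) (hchain : RootChain Φ α β p q) (hpq : p + q = 3) :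
    pairingB B (β - (q : ℚ) • α) α = -3 := by
  have hαα := (hRS.posdef α (hRS.ne_zero α hα)).ne'
  have hbound (k : ℤ) (hk1 : -(q : ℤ) ≤ k) (hk2 : k ≤ p) : |pairingB B β α + 2 * k| ≤ 3 := by
    rw [← pairingB_add_smul hαα]
    refine hRS.abs_pairingB_le_three (hchain.1 k hk1 hk2) hα ?_
    exact LinearIndependent.pair_symm_iff.1 (hRS.linearIndependent_add_smul hα hβ h1 h2 k)
  have htop := (abs_le.1 (hbound p (by omega) le_rfl)).2
  have hbot := (abs_le.1 (hbound (-q) le_rfl (by omega))).1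
  have hpq' : (p : ℚ) + q = 3 := by exact_mod_cast hpq
  rw [sub_eq_add_neg, ← neg_smul, pairingB_add_smul hαα]
  push_cast at htop hbot
  linarith

end RootChain

theorem rank_two_of_root_string_length_three
    (B : E →ₗ[ℚ] E →ₗ[ℚ] ℚ) (Φ : Set E) (hRS : IsRootSystem B Φ)
    (hirr : IsIrreducibleRS B Φ)
    {α β : E} (hα : α ∈ Φ) (hβ : β ∈ Φ) (h1 : β ≠ α) (h2 : β ≠ -α)
    (p q : ℕ) (hchain : RootChain Φ α β p q) (hpq : p + q = 3) :
    Module.finrank ℚ (Submodule.span ℚ Φ) = 2 := by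
  set γ := β - (q : ℚ) • α
  have hγ : γ ∈ Φ := hchain.sub_mem
  have hγα : pairingB B γ α = -3 := hchain.pairingB_sub_eq_neg_three hRS hα hβ h1 h2 hpq
  have hind : LinearIndependent ℚ ![α, γ] := by
    simpa [γ, sub_eq_add_neg] using hRS.linearIndependent_add_smul hα hβ h1 h2 (-q)
  have hαγ : pairingB B α γ = -1 :=
    hRS.pairingB_eq_neg_one_of_pairingB_eq_neg_three hγ hα
      (LinearIndependent.pair_symm_iff.1 hind) hγα
  have hsub : ({α, γ} : Set E) ⊆ Φ := Set.insert_subset hα (Set.singleton_subset_iff.2 hγ)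
  have hspan : span ℚ Φ = span ℚ {α, γ} := by
    refine le_antisymm (span_le.2 (hirr.subset_span_of_orthogonal hsub (Set.insert_nonempty _ _)
      fun δ hδ hδV x hx ↦ ?_)) (span_mono hsub)
    obtain ⟨hαδ, hγδ⟩ := hRS.orthogonal_of_notMem_span_pair hα hγ hδ hγα hαγ hδV
    rcases hx with rfl | rfl
    · exact hαδ
    · exact hγδ
  rw [hspan, ← Matrix.range_cons_cons_empty α γ ![], finrank_span_eq_card hind, Fintype.card_fin]
end
end

section
/- For all i, j ∈ I one has h_j ∘ e_i − e_i ∘ h_j = (α_i, α_j^∨) e_i and h_j ∘ f_i − f_i ∘ h_j = −(α_i, α_j^∨) f_i. -/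
noncomputable section

variable {E : Type*} [AddCommGroup E] [Module ℚ E]

/-!
Each `h_j` is diagonal in the basis `{u_k} ∪ {v_α}`, with eigenvalue `0` on `u_k` and
`(α, α_j^∨)` on `v_α`. Both `e_i` and `f_i` send each basis vector to a multiple of a single
basis vector whose `h_j`-eigenvalue is shifted by `±(α_i, α_j^∨)`, by additivity of the pairing
in its first argument; an operator that shifts all eigenvalues of a diagonal operator by `c`
has commutator `c` times itself with it.
-/

lemma pairingB_add (B : E →ₗ[ℚ] E →ₗ[ℚ] ℚ) (x y α : E) :
    pairingB B (x + y) α = pairingB B x α + pairingB B y α := by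
  simp [pairingB, mul_add, add_div]

lemma pairingB_sub (B : E →ₗ[ℚ] E →ₗ[ℚ] ℚ) (x y α : E) :
    pairingB B (x - y) α = pairingB B x α - pairingB B y α := by
  simp [pairingB, mul_sub, sub_div]

lemma pairingB_neg (B : E →ₗ[ℚ] E →ₗ[ℚ] ℚ) (x α : E) :
    pairingB B (-x) α = -pairingB B x α := by
  simp [pairingB, neg_div]

lemma pairingB_self {B : E →ₗ[ℚ] E →ₗ[ℚ] ℚ} {α : E} (hα : B α α ≠ 0) :
    pairingB B α α = 2 := by
  rw [pairingB, mul_div_assoc, div_self hα, mul_one]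

theorem IsRootSystem.neg_mem_s12 {B : E →ₗ[ℚ] E →ₗ[ℚ] ℚ} {Φ : Set E} (hRS : IsRootSystem B Φ)
    {α : E} (hα : α ∈ Φ) : -α ∈ Φ := by
  have hB : B α α ≠ 0 := (hRS.posdef α (hRS.ne_zero α hα)).ne'
  have := hRS.reflMem α hα α hα
  rwa [pairingB_self hB, two_smul, sub_add_cancel_left] at this

def rootWeight (I : Type*) (B : E →ₗ[ℚ] E →ₗ[ℚ] ℚ) (Φ : Set E) (αj : E) :
    I ⊕ {x : E // x ∈ Φ} → ℂ :=
  Sum.elim 0 fun α => ((pairingB B α αj : ℚ) : ℂ)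

namespace Module.Basis

variable {ι R M : Type*} [CommRing R] [AddCommGroup M] [Module R M] (b : Basis ι R M)
  {D : M →ₗ[R] M} {w : ι → R}

lemma apply_smul_of_apply_eq_smul (hD : ∀ x, D (b x) = w x • b x) {y : ι} {μ : R}
    (hy : w y = μ) (r : R) : D (r • b y) = μ • r • b y := by
  rw [map_smul, hD, hy, smul_comm]

lemma comp_sub_comp_eq_smul (hD : ∀ x, D (b x) = w x • b x) {T : M →ₗ[R] M} {c : R}
    (hT : ∀ x, D (T (b x)) = (w x + c) • T (b x)) : D ∘ₗ T - T ∘ₗ D = c • T := by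
  refine b.ext fun x => ?_
  simp only [LinearMap.sub_apply, LinearMap.comp_apply, LinearMap.smul_apply, hT, hD,
    map_smul, add_smul, add_sub_cancel_left]

end Module.Basis

theorem h_e_f_commutator_relations_general
    {I : Type*} [Fintype I]
    (B : E →ₗ[ℚ] E →ₗ[ℚ] ℚ) (Φ : Set E) (hRS : IsRootSystem B Φ)
    (a : I → E) (hbase : IsBase Φ a)
    {M : Type*} [AddCommGroup M] [Module ℂ M]
    (b : Module.Basis (I ⊕ {x : E // x ∈ Φ}) ℂ M)
    (e f h : I → M →ₗ[ℂ] M) (mp mm : I → E → ℕ)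
(he_u : ∀ i j, e i (b (Sum.inl j)) =
      ((|pairingB B (a i) (a j)| : ℚ) : ℂ) • b (Sum.inr ⟨a i, hbase.mem i⟩))
    (he_v : ∀ i (α : {x : E // x ∈ Φ}) (hmem : (α : E) + a i ∈ Φ),
      e i (b (Sum.inr α)) = ((mm i (α : E) : ℕ) : ℂ) • b (Sum.inr ⟨(α : E) + a i, hmem⟩))
    (he_neg : ∀ i (α : {x : E // x ∈ Φ}), (α : E) = -a i →
      e i (b (Sum.inr α)) = b (Sum.inl i))
    (he_zero : ∀ i (α : {x : E // x ∈ Φ}), (α : E) + a i ∉ Φ → (α : E) ≠ -a i →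
      e i (b (Sum.inr α)) = 0)
    (hf_u : ∀ i j (β : {x : E // x ∈ Φ}), (β : E) = -a i →
      f i (b (Sum.inl j)) = ((|pairingB B (a i) (a j)| : ℚ) : ℂ) • b (Sum.inr β))
    (hf_v : ∀ i (α : {x : E // x ∈ Φ}) (hmem : (α : E) - a i ∈ Φ),
      f i (b (Sum.inr α)) = ((mp i (α : E) : ℕ) : ℂ) • b (Sum.inr ⟨(α : E) - a i, hmem⟩))
    (hf_pos : ∀ i (α : {x : E // x ∈ Φ}), (α : E) = a i →
      f i (b (Sum.inr α)) = b (Sum.inl i))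
    (hf_zero : ∀ i (α : {x : E // x ∈ Φ}), (α : E) - a i ∉ Φ → (α : E) ≠ a i →
      f i (b (Sum.inr α)) = 0)
(hh_u : ∀ i j, h i (b (Sum.inl j)) = 0)
    (hh_v : ∀ i (α : {x : E // x ∈ Φ}),
      h i (b (Sum.inr α)) = ((pairingB B (α : E) (a i) : ℚ) : ℂ) • b (Sum.inr α)) :
    ∀ i j, h j ∘ₗ e i - e i ∘ₗ h j = ((pairingB B (a i) (a j) : ℚ) : ℂ) • e i ∧
      h j ∘ₗ f i - f i ∘ₗ h j = -(((pairingB B (a i) (a j) : ℚ) : ℂ) • f i) := by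
  intro i j
  have hw : ∀ x, h j (b x) = rootWeight I B Φ (a j) x • b x := by
    rintro (k | α)
    · simp [rootWeight, hh_u]
    · exact hh_v j α
  refine ⟨b.comp_sub_comp_eq_smul hw fun x => ?_, ?_⟩
  · rcases x with k | α
    · rw [he_u]
      exact b.apply_smul_of_apply_eq_smul hw (by simp [rootWeight]) _
    by_cases hup : (α : E) + a i ∈ Φ
    · rw [he_v i α hup]
      exact b.apply_smul_of_apply_eq_smul hw (by simp [rootWeight, pairingB_add]) _
    by_cases hneg : (α : E) = -a i
    · rw [he_neg i α hneg, ← one_smul ℂ (b _)]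
      exact b.apply_smul_of_apply_eq_smul hw (by simp [rootWeight, hneg, pairingB_neg]) _
    · simp [he_zero i α hup hneg]
  · rw [← neg_smul]
    refine b.comp_sub_comp_eq_smul hw fun x => ?_
    rcases x with k | α
    · rw [hf_u i k ⟨-a i, hRS.neg_mem_s12 (hbase.mem i)⟩ rfl]
      exact b.apply_smul_of_apply_eq_smul hw (by simp [rootWeight, pairingB_neg]) _
    by_cases hdown : (α : E) - a i ∈ Φ
    · rw [hf_v i α hdown]
      exact b.apply_smul_of_apply_eq_smul hw (by simp [rootWeight, pairingB_sub]; ring) _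
    by_cases hpos : (α : E) = a i
    · rw [hf_pos i α hpos, ← one_smul ℂ (b _)]
      exact b.apply_smul_of_apply_eq_smul hw (by simp [rootWeight, hpos]) _
    · simp [hf_zero i α hdown hpos]

theorem h_e_f_commutator_relations
    {I : Type*} [Fintype I]
    (B : E →ₗ[ℚ] E →ₗ[ℚ] ℚ) (Φ : Set E) (hRS : IsRootSystem B Φ)
    (a : I → E) (hbase : IsBase Φ a)
    {M : Type*} [AddCommGroup M] [Module ℂ M]
    (b : Module.Basis (I ⊕ {x : E // x ∈ Φ}) ℂ M)
    (e f h : I → M →ₗ[ℂ] M) (mp mm : I → E → ℕ)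
(hm : ∀ i, ∀ α ∈ Φ, α ≠ a i → α ≠ -a i →
      ∃ p q : ℕ, RootChain Φ (a i) α p q ∧ mp i α = p + 1 ∧ mm i α = q + 1)
(he_u : ∀ i j, e i (b (Sum.inl j)) =
      ((|pairingB B (a i) (a j)| : ℚ) : ℂ) • b (Sum.inr ⟨a i, hbase.mem i⟩))
    (he_v : ∀ i (α : {x : E // x ∈ Φ}) (hmem : (α : E) + a i ∈ Φ),
      e i (b (Sum.inr α)) = ((mm i (α : E) : ℕ) : ℂ) • b (Sum.inr ⟨(α : E) + a i, hmem⟩))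
    (he_neg : ∀ i (α : {x : E // x ∈ Φ}), (α : E) = -a i →
      e i (b (Sum.inr α)) = b (Sum.inl i))
    (he_zero : ∀ i (α : {x : E // x ∈ Φ}), (α : E) + a i ∉ Φ → (α : E) ≠ -a i →
      e i (b (Sum.inr α)) = 0)
    (hf_u : ∀ i j (β : {x : E // x ∈ Φ}), (β : E) = -a i →
      f i (b (Sum.inl j)) = ((|pairingB B (a i) (a j)| : ℚ) : ℂ) • b (Sum.inr β))
    (hf_v : ∀ i (α : {x : E // x ∈ Φ}) (hmem : (α : E) - a i ∈ Φ),
      f i (b (Sum.inr α)) = ((mp i (α : E) : ℕ) : ℂ) • b (Sum.inr ⟨(α : E) - a i, hmem⟩))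
    (hf_pos : ∀ i (α : {x : E // x ∈ Φ}), (α : E) = a i →
      f i (b (Sum.inr α)) = b (Sum.inl i))
    (hf_zero : ∀ i (α : {x : E // x ∈ Φ}), (α : E) - a i ∉ Φ → (α : E) ≠ a i →
      f i (b (Sum.inr α)) = 0)
(hh_u : ∀ i j, h i (b (Sum.inl j)) = 0)
    (hh_v : ∀ i (α : {x : E // x ∈ Φ}),
      h i (b (Sum.inr α)) = ((pairingB B (α : E) (a i) : ℚ) : ℂ) • b (Sum.inr α)) :
    ∀ i j, h j ∘ₗ e i - e i ∘ₗ h j = ((pairingB B (a i) (a j) : ℚ) : ℂ) • e i ∧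
      h j ∘ₗ f i - f i ∘ₗ h j = -(((pairingB B (a i) (a j) : ℚ) : ℂ) • f i) :=
  h_e_f_commutator_relations_general B Φ hRS a hbase b e f h mp mm he_u he_v he_neg he_zero hf_u
    hf_v hf_pos hf_zero hh_u hh_v
end
end

section
/- Let ω : M → M be the linear map with ω(u_j) = u_j and ω(v_α) = v_{−α}. Then ω² = id_M, ω ∘ e_i = f_i ∘ ω, and ω ∘ h_i = −h_i ∘ ω for all i ∈ I. -/
/-! On basis vectors `ω` fixes `u_j` and swaps `v_α ↔ v_{-α}`, so `ω² = id`, and `ω h_i = -h_i ω`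
since `(-α, α_i^∨) = -(α, α_i^∨)`. Comparing `ω e_i` with `f_i ω` on basis vectors, the only
nontrivial point is `m_i^-(α) = m_i^+(-α)`, which holds because negation reverses the
`α_i`-string through `α`. -/

noncomputable section

variable {E : Type*} [AddCommGroup E] [Module ℚ E]

namespace IsRootSystem

variable {B : E →ₗ[ℚ] E →ₗ[ℚ] ℚ} {Φ : Set E}

lemma pairingB_self (hRS : IsRootSystem B Φ) {α : E} (hα : α ∈ Φ) : pairingB B α α = 2 := by
  have hB : B α α ≠ 0 := (hRS.posdef α (hRS.ne_zero α hα)).ne'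
  rw [pairingB]
  field_simp

lemma add_self_notMem (hRS : IsRootSystem B Φ) {α : E} (hα : α ∈ Φ) : α + α ∉ Φ := by
  intro h
  rw [← two_smul ℚ] at h
  rcases hRS.reduced α hα 2 h with h | h <;> norm_num at h

end IsRootSystem

namespace RootChain

variable {Φ : Set E} {γ β : E} {p q p' q' : ℕ}

lemma reverse (h : RootChain Φ γ β p q) : RootChain Φ (-γ) β q p := by
  obtain ⟨mem, hq, hp⟩ := h
  refine ⟨fun k hk₁ hk₂ => ?_, ?_, ?_⟩
  · convert mem (-k) (by omega) (by omega) using 1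
    push_cast
    module
  · rwa [smul_neg, sub_neg_eq_add]
  · rwa [smul_neg, ← sub_eq_add_neg]

lemma neg (hΦ : ∀ x ∈ Φ, -x ∈ Φ) (h : RootChain Φ γ β p q) : RootChain Φ γ (-β) q p := by
  obtain ⟨mem, hq, hp⟩ := h
  refine ⟨fun k hk₁ hk₂ => ?_, fun hc => hp ?_, fun hc => hq ?_⟩
  · convert hΦ _ (mem (-k) (by omega) (by omega)) using 1
    push_cast
    module
  · convert hΦ _ hc using 1
    module
  · convert hΦ _ hc using 1
    module

lemma up_length_unique (h : RootChain Φ γ β p q) (h' : RootChain Φ γ β p' q') : p = p' := by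
  have key : ∀ {p p' q q' : ℕ}, RootChain Φ γ β p q → RootChain Φ γ β p' q' → ¬ p < p' := by
    intro p p' q q' h h' hlt
    apply h.2.2
    convert h'.1 (p + 1) (by omega) (by omega) using 2
    push_cast
    rfl
  exact le_antisymm (not_lt.mp (key h' h)) (not_lt.mp (key h h'))

lemma unique (h : RootChain Φ γ β p q) (h' : RootChain Φ γ β p' q') : p = p' ∧ q = q' :=
  ⟨h.up_length_unique h', h.reverse.up_length_unique h'.reverse⟩

end RootChain

lemma mm_eq_mp_neg {I : Type*} {B : E →ₗ[ℚ] E →ₗ[ℚ] ℚ} {Φ : Set E} (hRS : IsRootSystem B Φ)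
    {a : I → E} {mp mm : I → E → ℕ}
    (hm : ∀ i, ∀ α ∈ Φ, α ≠ a i → α ≠ -a i →
      ∃ p q : ℕ, RootChain Φ (a i) α p q ∧ mp i α = p + 1 ∧ mm i α = q + 1)
    {i : I} {α : E} (hα : α ∈ Φ) (h₁ : α ≠ a i) (h₂ : α ≠ -a i) :
    mm i α = mp i (-α) := by
  obtain ⟨p, q, hch, -, hmm⟩ := hm i α hα h₁ h₂
  obtain ⟨p', q', hch', hmp', -⟩ :=
    hm i (-α) (hRS.neg_mem hα) (by rwa [ne_eq, neg_eq_iff_eq_neg]) (by rwa [ne_eq, neg_inj])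
  have := (hch.neg (fun _ => hRS.neg_mem)).unique hch'
  omega

lemma omega_e_eq_f_omega_root {I : Type*} {B : E →ₗ[ℚ] E →ₗ[ℚ] ℚ} {Φ : Set E}
    (hRS : IsRootSystem B Φ) (a : I → E) {M : Type*} [AddCommGroup M] [Module ℂ M]
    (b : I ⊕ {x : E // x ∈ Φ} → M) (e f ω : M →ₗ[ℂ] M) (i : I) (mp mm : E → ℕ)
    (hmm : ∀ α ∈ Φ, α ≠ a i → α ≠ -a i → mm α = mp (-α))
    (he_v : ∀ (α : {x : E // x ∈ Φ}) (hmem : (α : E) + a i ∈ Φ),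
      e (b (Sum.inr α)) = (mm α : ℂ) • b (Sum.inr ⟨α + a i, hmem⟩))
    (he_neg : ∀ α : {x : E // x ∈ Φ}, (α : E) = -a i → e (b (Sum.inr α)) = b (Sum.inl i))
    (he_zero : ∀ α : {x : E // x ∈ Φ}, (α : E) + a i ∉ Φ → (α : E) ≠ -a i →
      e (b (Sum.inr α)) = 0)
    (hf_v : ∀ (α : {x : E // x ∈ Φ}) (hmem : (α : E) - a i ∈ Φ),
      f (b (Sum.inr α)) = (mp α : ℂ) • b (Sum.inr ⟨α - a i, hmem⟩))
    (hf_pos : ∀ α : {x : E // x ∈ Φ}, (α : E) = a i → f (b (Sum.inr α)) = b (Sum.inl i))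
    (hf_zero : ∀ α : {x : E // x ∈ Φ}, (α : E) - a i ∉ Φ → (α : E) ≠ a i →
      f (b (Sum.inr α)) = 0)
    (hω_u : ω (b (Sum.inl i)) = b (Sum.inl i))
    (hω_v : ∀ (α β : {x : E // x ∈ Φ}), (β : E) = -(α : E) →
      ω (b (Sum.inr α)) = b (Sum.inr β))
    (α : {x : E // x ∈ Φ}) :
    ω (e (b (Sum.inr α))) = f (ω (b (Sum.inr α))) := by
  have hnα : -(α : E) ∈ Φ := hRS.neg_mem α.2
  rw [hω_v α ⟨_, hnα⟩ rfl]
  by_cases hneg : (α : E) = -a i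
  · rw [he_neg α hneg, hω_u, hf_pos _ (by simp [hneg])]
  have hsub : -(α : E) - a i ∈ Φ ↔ (α : E) + a i ∈ Φ := by
    refine ⟨fun h => ?_, fun h => ?_⟩ <;> convert hRS.neg_mem h using 1 <;> abel
  by_cases hadd : (α : E) + a i ∈ Φ
  · have hpos : (α : E) ≠ a i := by
      rintro hα
      exact hRS.add_self_notMem (α := a i) (hα ▸ α.2) (hα ▸ hadd)
    rw [he_v α hadd, map_smul, hω_v _ ⟨_, hsub.mpr hadd⟩ (by simp; abel),
      hf_v ⟨_, hnα⟩ (hsub.mpr hadd), hmm α α.2 hpos hneg]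
  · rw [he_zero α hadd hneg, map_zero,
      hf_zero ⟨_, hnα⟩ (hsub.not.mpr hadd) (by rwa [ne_eq, neg_eq_iff_eq_neg])]

theorem omega_involution_swaps_e_f
    {I : Type*} [Fintype I]
    (B : E →ₗ[ℚ] E →ₗ[ℚ] ℚ) (Φ : Set E) (hRS : IsRootSystem B Φ)
    (a : I → E) (hbase : IsBase Φ a)
    {M : Type*} [AddCommGroup M] [Module ℂ M]
    (b : Module.Basis (I ⊕ {x : E // x ∈ Φ}) ℂ M)
    (e f h : I → M →ₗ[ℂ] M) (mp mm : I → E → ℕ)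
(hm : ∀ i, ∀ α ∈ Φ, α ≠ a i → α ≠ -a i →
      ∃ p q : ℕ, RootChain Φ (a i) α p q ∧ mp i α = p + 1 ∧ mm i α = q + 1)
(he_u : ∀ i j, e i (b (Sum.inl j)) =
      ((|pairingB B (a i) (a j)| : ℚ) : ℂ) • b (Sum.inr ⟨a i, hbase.mem i⟩))
    (he_v : ∀ i (α : {x : E // x ∈ Φ}) (hmem : (α : E) + a i ∈ Φ),
      e i (b (Sum.inr α)) = ((mm i (α : E) : ℕ) : ℂ) • b (Sum.inr ⟨(α : E) + a i, hmem⟩))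
    (he_neg : ∀ i (α : {x : E // x ∈ Φ}), (α : E) = -a i →
      e i (b (Sum.inr α)) = b (Sum.inl i))
    (he_zero : ∀ i (α : {x : E // x ∈ Φ}), (α : E) + a i ∉ Φ → (α : E) ≠ -a i →
      e i (b (Sum.inr α)) = 0)
    (hf_u : ∀ i j (β : {x : E // x ∈ Φ}), (β : E) = -a i →
      f i (b (Sum.inl j)) = ((|pairingB B (a i) (a j)| : ℚ) : ℂ) • b (Sum.inr β))
    (hf_v : ∀ i (α : {x : E // x ∈ Φ}) (hmem : (α : E) - a i ∈ Φ),
      f i (b (Sum.inr α)) = ((mp i (α : E) : ℕ) : ℂ) • b (Sum.inr ⟨(α : E) - a i, hmem⟩))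
    (hf_pos : ∀ i (α : {x : E // x ∈ Φ}), (α : E) = a i →
      f i (b (Sum.inr α)) = b (Sum.inl i))
    (hf_zero : ∀ i (α : {x : E // x ∈ Φ}), (α : E) - a i ∉ Φ → (α : E) ≠ a i →
      f i (b (Sum.inr α)) = 0)
(hh_u : ∀ i j, h i (b (Sum.inl j)) = 0)
    (hh_v : ∀ i (α : {x : E // x ∈ Φ}),
      h i (b (Sum.inr α)) = ((pairingB B (α : E) (a i) : ℚ) : ℂ) • b (Sum.inr α))
    (ω : M →ₗ[ℂ] M)
    (hω_u : ∀ j, ω (b (Sum.inl j)) = b (Sum.inl j))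
    (hω_v : ∀ (α β : {x : E // x ∈ Φ}), (β : E) = -(α : E) →
      ω (b (Sum.inr α)) = b (Sum.inr β)) :
    ω ∘ₗ ω = LinearMap.id ∧
      (∀ i, ω ∘ₗ e i = f i ∘ₗ ω) ∧ (∀ i, ω ∘ₗ h i = -(h i ∘ₗ ω)) := by
  have hnα (α : {x : E // x ∈ Φ}) : -(α : E) ∈ Φ := hRS.neg_mem α.2
  refine ⟨b.ext ?_, fun i => b.ext ?_, fun i => b.ext ?_⟩
  · rintro (j | α)
    · simp [hω_u]
    · simp only [LinearMap.comp_apply, LinearMap.id_apply]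
      rw [hω_v α ⟨_, hnα α⟩ rfl, hω_v ⟨_, hnα α⟩ α (neg_neg _).symm]
  · rintro (j | α)
    · have hna : -a i ∈ Φ := hRS.neg_mem (hbase.mem i)
      simp only [LinearMap.comp_apply]
      rw [he_u, map_smul, hω_u, hω_v _ ⟨_, hna⟩ rfl, hf_u i j ⟨_, hna⟩ rfl]
    · exact omega_e_eq_f_omega_root hRS a b (e i) (f i) ω i (mp i) (mm i)
        (fun _ => mm_eq_mp_neg hRS hm) (he_v i) (he_neg i) (he_zero i) (hf_v i) (hf_pos i)
        (hf_zero i) (hω_u i) hω_v α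
  · rintro (j | α)
    · simp [hω_u, hh_u]
    · simp only [LinearMap.comp_apply, LinearMap.neg_apply]
      rw [hh_v, map_smul, hω_v α ⟨_, hnα α⟩ rfl, hh_v, pairingB_neg_left]
      simp
end
end
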